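/- Let t be a β-normal λ-term. Then ⊢_F t : Ent holds if and only if there exists n ∈ ℕ such that t is the Church numeral n̲. -/

import Mathlib

set_option maxHeartbeats 1000000


/-- Untyped λ-terms in de Bruijn representation. -/
inductive Trm : Type
  | var : ℕ → Trm
  | app : Trm → Trm → Trm
  | lam : Trm → Trm
  deriving DecidableEq

namespace Trm

/-- The set of free variables of a term (as de Bruijn indices). -/
def fv : Trm → Set ℕ
  | var n => {n}
  | app u v => fv u ∪ fv v
  | lam u => {n | n + 1 ∈ fv u}

/-- A term is closed if it has no free variables. -/
def Closed (t : Trm) : Prop := fv t = ∅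

/-- λI-terms: abstraction is allowed only on variables occurring free in the body. -/
inductive IsLI : Trm → Prop
  | var (n : ℕ) : IsLI (var n)
  | app {u v : Trm} : IsLI u → IsLI v → IsLI (app u v)
  | lam {u : Trm} : IsLI u → 0 ∈ fv u → IsLI (lam u)

/-- Lifting of free variables ≥ d. -/
def lift (d : ℕ) : Trm → Trm
  | var n => if n < d then var n else var (n + 1)
  | app u v => app (lift d u) (lift d v)
  | lam u => lam (lift (d + 1) u)

def liftTimes (k : ℕ) (t : Trm) : Trm := (lift 0)^[k] t

/-- Capture-avoiding substitution of the k-th free variable. -/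
def subst : Trm → ℕ → Trm → Trm
  | var n, k, v => if n < k then var n else if n = k then liftTimes k v else var (n - 1)
  | app a b, k, v => app (subst a k v) (subst b k v)
  | lam a, k, v => lam (subst a (k + 1) v)

end Trm

/-- One step of β-reduction. -/
inductive Beta : Trm → Trm → Prop
  | beta {u v : Trm} : Beta (.app (.lam u) v) (u.subst 0 v)
  | appL {u u' v : Trm} : Beta u u' → Beta (.app u v) (.app u' v)
  | appR {u v v' : Trm} : Beta v v' → Beta (.app u v) (.app u v')
  | lam {u u' : Trm} : Beta u u' → Beta (.lam u) (.lam u')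

/-- One step of η-reduction: λx (u)x → u when x ∉ Fv(u). -/
inductive Eta : Trm → Trm → Prop
  | eta (u : Trm) : Eta (.lam (.app (u.lift 0) (.var 0))) u
  | appL {u u' v : Trm} : Eta u u' → Eta (.app u v) (.app u' v)
  | appR {u v v' : Trm} : Eta v v' → Eta (.app u v) (.app u v')
  | lam {u u' : Trm} : Eta u u' → Eta (.lam u) (.lam u')

/-- β-reduction (reflexive-transitive closure). -/
def BetaStar : Trm → Trm → Prop := Relation.ReflTransGen Beta

/-- βη-reduction (reflexive-transitive closure of the union of β and η). -/
def BetaEtaStar : Trm → Trm → Prop := Relation.ReflTransGen (fun a b => Beta a b ∨ Eta a b)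

/-- η-reduction (reflexive-transitive closure). -/
def EtaStar : Trm → Trm → Prop := Relation.ReflTransGen Eta

/-- A term is β-normal iff it contains no β-redex. -/
def BetaNormal (t : Trm) : Prop := ∀ u, ¬ Beta t u

/-- A term is βη-normal iff it contains neither a β-redex nor an η-redex. -/
def BetaEtaNormal (t : Trm) : Prop := ∀ u, ¬ Beta t u ∧ ¬ Eta t u

/-- A term is strongly normalizable iff every β-reduction sequence from it is finite. -/
def StronglyNormalizable (t : Trm) : Prop :=
  ¬ ∃ f : ℕ → Trm, f 0 = t ∧ ∀ n, Beta (f n) (f (n + 1))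

/-- Body of a Church numeral: (f)ⁿ x with f = var 0, x = var 1. -/
def churchBody : ℕ → Trm
  | 0 => .var 1
  | n + 1 => .app (.var 0) (churchBody n)

/-- The Church numeral n̲ = λx λf (f)ⁿ x. -/
def church (n : ℕ) : Trm := .lam (.lam (churchBody n))

/-- Types of system F in de Bruijn representation. -/
inductive Ty : Type
  | var : ℕ → Ty
  | arr : Ty → Ty → Ty
  | all : Ty → Ty
  deriving DecidableEq

namespace Ty

/-- Free type variables. -/
def tfv : Ty → Set ℕ
  | var n => {n}
  | arr A B => tfv A ∪ tfv B
  | all A => {n | n + 1 ∈ tfv A}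

/-- Lifting of free type variables ≥ d. -/
def tlift (d : ℕ) : Ty → Ty
  | var n => if n < d then var n else var (n + 1)
  | arr A B => arr (tlift d A) (tlift d B)
  | all A => all (tlift (d + 1) A)

def tliftTimes (k : ℕ) (A : Ty) : Ty := (tlift 0)^[k] A

/-- Substitution of the k-th free type variable. -/
def tsubst : Ty → ℕ → Ty → Ty
  | var n, k, G => if n < k then var n else if n = k then tliftTimes k G else var (n - 1)
  | arr A B, k, G => arr (tsubst A k G) (tsubst B k G)
  | all A, k, G => all (tsubst A (k + 1) G)

/-- Proper types: in every subtype ∀X E, the variable X occurs free in E. -/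
def Proper : Ty → Prop
  | var _ => True
  | arr A B => Proper A ∧ Proper B
  | all A => Proper A ∧ 0 ∈ tfv A

/-- Closed types. -/
def ClosedTy (A : Ty) : Prop := tfv A = ∅

end Ty

/-- Typing judgments of system F (restricted to proper types:
the rule (∀e) requires X free in A and instantiates at proper types only). -/
inductive Typing : List Ty → Trm → Ty → Prop
  | ax {Γ : List Ty} {n : ℕ} {A : Ty} :
      Γ[n]? = some A → (∀ B ∈ Γ, B.Proper) → Typing Γ (.var n) A
  | arrI {Γ : List Ty} {A B : Ty} {t : Trm} :
      A.Proper → Typing (A :: Γ) t B → Typing Γ (.lam t) (.arr A B)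
  | arrE {Γ : List Ty} {A B : Ty} {u v : Trm} :
      Typing Γ u (.arr A B) → Typing Γ v A → Typing Γ (.app u v) B
  | allI {Γ : List Ty} {A : Ty} {t : Trm} :
      0 ∈ Ty.tfv A → Typing (Γ.map (Ty.tlift 0)) t A → Typing Γ t (.all A)
  | allE {Γ : List Ty} {A : Ty} {t : Trm} (G : Ty) :
      G.Proper → 0 ∈ Ty.tfv A → Typing Γ t (.all A) → Typing Γ t (A.tsubst 0 G)

/-- The type Ent = ∀X {X → [(X → X) → X]}. -/
def Ent : Ty := .all (.arr (.var 0) (.arr (.arr (.var 0) (.var 0)) (.var 0)))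

/-! Realizability with reducibility candidates: interpret every type as a set of terms closed
under β-expansion, so that every typable term belongs to the interpretation of its type.
Interpreting `X` by the set of terms that reduce to some `(f)ⁿ x` shows that `(t) x f`
reduces to some `(f)ⁿ x` whenever `⊢ t : Ent`. A closed β-normal `t` is of the form `λx λf a`
with `a` normal, so this reduction is forced: its two head steps lead back to `a`, hence
`a = (f)ⁿ x`. -/

theorem Relation.ReflTransGen.of_unique_head {α : Type*} {r : α → α → Prop} {a b c : α}
    (h : Relation.ReflTransGen r a c) (hab : r a b) (huniq : ∀ z, r a z → z = b)
    (hc : ∀ z, ¬ r c z) : Relation.ReflTransGen r b c := by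
  rcases h.cases_head with rfl | ⟨z, haz, hzc⟩
  · exact absurd hab (hc b)
  · exact huniq z haz ▸ hzc

def scons {α : Type*} (a : α) (f : ℕ → α) : ℕ → α
  | 0 => a
  | n + 1 => f n

theorem forall_scons {α : Type*} {p : α → Prop} {a : α} {f : ℕ → α} (ha : p a)
    (hf : ∀ n, p (f n)) : ∀ n, p (scons a f n)
  | 0 => ha
  | n + 1 => hf n

namespace Trm

@[simp]
theorem liftTimes_var (k m : ℕ) : liftTimes k (var m) = var (m + k) := by
  induction k with
  | zero => rfl
  | succ k ih =>
    rw [liftTimes, Function.iterate_succ_apply', ← liftTimes, ih]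
    simp only [lift, Nat.not_lt_zero, if_false]
    rfl

theorem liftTimes_succ (t : Trm) (k : ℕ) : liftTimes (k + 1) t = (liftTimes k t).lift 0 :=
  Function.iterate_succ_apply' _ _ _

theorem lift_lift_of_le (t : Trm) {i j : ℕ} (hij : i ≤ j) :
    (t.lift j).lift i = (t.lift i).lift (j + 1) := by
  induction t generalizing i j with
  | var n => simp only [lift]; split_ifs <;> simp only [lift] <;> split_ifs <;> grind
  | app u v ihu ihv => simp [lift, ihu hij, ihv hij]
  | lam u ih => simp [lift, ih (Nat.succ_le_succ hij)]

theorem lift_liftTimes_of_le (t : Trm) {j k : ℕ} (hjk : j ≤ k) :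
    (liftTimes k t).lift j = liftTimes (k + 1) t := by
  induction k generalizing j with
  | zero => rw [Nat.le_zero.1 hjk, liftTimes_succ]
  | succ k ih =>
    cases j with
    | zero => rw [liftTimes_succ t (k + 1)]
    | succ j =>
      rw [liftTimes_succ t k, ← lift_lift_of_le _ (Nat.zero_le j), ih (by omega),
        ← liftTimes_succ]

theorem subst_lift_succ_of_le (t u : Trm) {j k : ℕ} (hjk : j ≤ k) :
    (t.lift j).subst (k + 1) u = (t.subst k u).lift j := by
  induction t generalizing j k with
  | var n =>
    simp only [lift, subst]
    split_ifs <;> simp only [subst, lift] <;> split_ifs <;>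
      first | rfl | omega | (congr 1; omega) | (subst_vars; exact (lift_liftTimes_of_le u hjk).symm)
  | app a b iha ihb => simp [lift, subst, iha hjk, ihb hjk]
  | lam a ih => simp [lift, subst, ih (Nat.succ_le_succ hjk)]

theorem subst_lift_self (t u : Trm) (k : ℕ) : (t.lift k).subst k u = t := by
  induction t generalizing k with
  | var n =>
    simp only [lift]
    split_ifs <;> simp only [subst] <;> split_ifs <;> first | rfl | omega
  | app a b iha ihb => simp [lift, subst, iha, ihb]
  | lam a ih => simp [lift, subst, ih]

theorem subst_subst_var_eq_self (a : Trm) (d : ℕ) (h : ∀ n ∈ a.fv, n < d + 2) :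
    (a.subst (d + 1) (var 1)).subst d (var 0) = a := by
  induction a generalizing d with
  | var n =>
    have hn : n < d + 2 := h n rfl
    simp only [subst]
    split_ifs <;> simp only [liftTimes_var, subst] <;> split_ifs <;>
      first | rfl | omega | (congr 1; omega)
  | app u v ihu ihv =>
    simp only [subst]
    rw [ihu d fun n hn => h n (Or.inl hn), ihv d fun n hn => h n (Or.inr hn)]
  | lam u ih =>
    simp only [subst]
    rw [ih (d + 1)]
    rintro (_ | n) hn
    · omega
    · exact Nat.succ_lt_succ (h n hn)

def upSubst (σ : ℕ → Trm) : ℕ → Trm := scons (var 0) fun n => (σ n).lift 0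

def msubst (σ : ℕ → Trm) : Trm → Trm
  | var n => σ n
  | app u v => app (msubst σ u) (msubst σ v)
  | lam u => lam (msubst (upSubst σ) u)

theorem subst_msubst (t : Trm) (σ : ℕ → Trm) (k : ℕ) (u : Trm) :
    (msubst σ t).subst k u = msubst (fun n => (σ n).subst k u) t := by
  induction t generalizing σ k with
  | var n => rfl
  | app a b iha ihb => simp [msubst, subst, iha, ihb]
  | lam a ih =>
    simp only [msubst, subst, ih]
    congr 2
    funext n
    cases n with
    | zero => simp [upSubst, scons, subst]
    | succ n => simp [upSubst, scons, subst_lift_succ_of_le _ u (Nat.zero_le k)]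

theorem subst_msubst_upSubst (t : Trm) (σ : ℕ → Trm) (u : Trm) :
    (msubst (upSubst σ) t).subst 0 u = msubst (scons u σ) t := by
  rw [subst_msubst]
  congr 1
  funext n
  cases n with
  | zero => simp [upSubst, scons, subst, liftTimes]
  | succ n => simp [upSubst, scons, subst_lift_self]

theorem msubst_var (t : Trm) : msubst var t = t := by
  have hup : upSubst var = var := by
    funext n
    cases n <;> simp [upSubst, scons, lift]
  induction t with
  | var n => rfl
  | app a b iha ihb => simp [msubst, iha, ihb]
  | lam a ih => simp [msubst, hup, ih]

theorem exists_subst_var_eq_var (n k m : ℕ) : ∃ m', (var n).subst k (var m) = var m' := by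
  simp only [subst]
  split_ifs
  exacts [⟨n, rfl⟩, ⟨m + k, liftTimes_var k m⟩, ⟨n - 1, rfl⟩]

theorem subst_var_ne_lam {u : Trm} (hu : ∀ w, u ≠ lam w) (k m : ℕ) :
    ∀ w, u.subst k (var m) ≠ lam w := by
  cases u with
  | var n =>
    obtain ⟨m', hm'⟩ := exists_subst_var_eq_var n k m
    simp [hm']
  | app a b => simp [subst]
  | lam a => exact absurd rfl (hu a)

end Trm

open Trm

theorem betaNormal_var (n : ℕ) : BetaNormal (.var n) := nofun

theorem betaNormal_lam_iff {u : Trm} : BetaNormal (.lam u) ↔ BetaNormal u :=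
  ⟨fun h u' hu' => h _ hu'.lam, fun h _ hb => by cases hb with | lam hb => exact h _ hb⟩

theorem betaNormal_app_iff {u v : Trm} :
    BetaNormal (.app u v) ↔ (∀ w, u ≠ .lam w) ∧ BetaNormal u ∧ BetaNormal v := by
  refine ⟨fun h => ⟨?_, fun _ hu => h _ hu.appL, fun _ hv => h _ hv.appR⟩, ?_⟩
  · rintro w rfl
    exact h _ .beta
  · rintro ⟨hl, hu, hv⟩ _ hb
    cases hb with
    | beta => exact hl _ rfl
    | appL hb => exact hu _ hb
    | appR hb => exact hv _ hb

theorem BetaNormal.subst_var {t : Trm} (ht : BetaNormal t) (k m : ℕ) :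
    BetaNormal (t.subst k (.var m)) := by
  induction t generalizing k with
  | var n =>
    obtain ⟨m', hm'⟩ := exists_subst_var_eq_var n k m
    rw [hm']
    exact betaNormal_var m'
  | lam u ih => exact betaNormal_lam_iff.2 (ih (betaNormal_lam_iff.1 ht) _)
  | app u v ihu ihv =>
    obtain ⟨hl, hu, hv⟩ := betaNormal_app_iff.1 ht
    exact betaNormal_app_iff.2 ⟨subst_var_ne_lam hl k m, ihu hu k, ihv hv k⟩

theorem BetaNormal.eq_of_betaStar {s w : Trm} (hs : BetaNormal s) (h : BetaStar s w) : s = w := by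
  rcases h.cases_head with rfl | ⟨z, hz, -⟩
  · rfl
  · exact absurd hz (hs z)

theorem BetaNormal.exists_eq_lam {t : Trm} (ht : BetaNormal t) (hc : t.Closed) :
    ∃ u, t = .lam u := by
  induction t with
  | var n => exact absurd hc (Set.nonempty_iff_ne_empty.1 ⟨n, rfl⟩)
  | lam u => exact ⟨u, rfl⟩
  | app u v ihu =>
    obtain ⟨hl, hu, -⟩ := betaNormal_app_iff.1 ht
    obtain ⟨w, rfl⟩ := ihu hu (Set.subset_eq_empty Set.subset_union_left hc)
    exact absurd rfl (hl w)

theorem beta_app_lam_var_eq {u z : Trm} {m : ℕ} (hu : BetaNormal u)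
    (h : Beta (.app (.lam u) (.var m)) z) : z = u.subst 0 (.var m) := by
  cases h with
  | beta => rfl
  | appL h => exact absurd h (betaNormal_lam_iff.2 hu _)
  | appR h => cases h

theorem beta_app_var_eq {s s' z : Trm} {m : ℕ} (hs : ∀ w, s ≠ .lam w)
    (huniq : ∀ z, Beta s z → z = s') (h : Beta (.app s (.var m)) z) : z = .app s' (.var m) := by
  cases h with
  | beta => exact absurd rfl (hs _)
  | appL h => rw [huniq _ h]
  | appR h => cases h

theorem Typing.lt_length_of_mem_fv {Γ : List Ty} {t : Trm} {A : Ty} (h : Typing Γ t A) :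
    ∀ n ∈ t.fv, n < Γ.length := by
  induction h with
  | ax hget =>
    rintro m rfl
    exact (List.getElem?_eq_some_iff.1 hget).1
  | arrI _ _ ih => exact fun m hm => Nat.succ_lt_succ_iff.1 (ih (m + 1) hm)
  | arrE _ _ ihu ihv => exact fun m hm => hm.elim (ihu m) (ihv m)
  | allI _ _ ih => simpa using ih
  | allE _ _ _ _ ih => exact ih

theorem Typing.closed {t : Trm} {A : Ty} (h : Typing [] t A) : t.Closed :=
  Set.eq_empty_of_forall_notMem fun n hn => Nat.not_lt_zero n (h.lt_length_of_mem_fv n hn)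

/-- Reducibility candidates, in the weak form that only asks for closure under β-expansion. -/
def Saturated (S : Set Trm) : Prop := ∀ ⦃t u : Trm⦄, Beta t u → u ∈ S → t ∈ S

namespace Ty

def interp : Ty → (ℕ → Set Trm) → Set Trm
  | var n, ρ => ρ n
  | arr A B, ρ => {t | ∀ u ∈ interp A ρ, Trm.app t u ∈ interp B ρ}
  | all A, ρ => ⋂ (S : Set Trm) (_ : Saturated S), interp A (scons S ρ)

theorem saturated_interp (A : Ty) {ρ : ℕ → Set Trm} (hρ : ∀ n, Saturated (ρ n)) :
    Saturated (interp A ρ) := by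
  induction A generalizing ρ with
  | var n => exact hρ n
  | arr A B _ ihB => exact fun t u hb hu v hv => ihB hρ hb.appL (hu v hv)
  | all A ih =>
    intro t u hb hu
    simp only [interp, Set.mem_iInter] at hu ⊢
    exact fun S hS => ih (forall_scons hS hρ) hb (hu S hS)

theorem interp_tlift (A : Ty) (ρ : ℕ → Set Trm) (d : ℕ) :
    interp (A.tlift d) ρ = interp A fun n => if n < d then ρ n else ρ (n + 1) := by
  induction A generalizing ρ d with
  | var n => simp only [tlift]; split_ifs <;> simp [interp, *]
  | arr A B ihA ihB => simp only [tlift, interp, ihA, ihB]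
  | all A ih =>
    simp only [tlift, interp, ih]
    refine Set.iInter_congr fun S => Set.iInter_congr fun _ => congrArg _ (funext fun n => ?_)
    cases n <;> simp [scons]

theorem interp_tlift_zero_scons (A : Ty) (S : Set Trm) (ρ : ℕ → Set Trm) :
    interp (A.tlift 0) (scons S ρ) = interp A ρ := by
  rw [interp_tlift]
  rfl

theorem tliftTimes_succ (G : Ty) (k : ℕ) : tliftTimes (k + 1) G = (tliftTimes k G).tlift 0 :=
  Function.iterate_succ_apply' _ _ _

theorem interp_tsubst (A G : Ty) (ρ : ℕ → Set Trm) (k : ℕ) :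
    interp (A.tsubst k G) ρ = interp A fun n =>
      if n < k then ρ n else if n = k then interp (tliftTimes k G) ρ else ρ (n - 1) := by
  induction A generalizing ρ k with
  | var n =>
    simp only [tsubst]
    split_ifs <;> simp only [interp] <;> split_ifs <;> rfl
  | arr A B ihA ihB => simp only [tsubst, interp, ihA, ihB]
  | all A ih =>
    simp only [tsubst, interp, ih]
    refine Set.iInter_congr fun S => Set.iInter_congr fun _ => congrArg _ (funext fun n => ?_)
    rcases n with _ | _ | n <;> simp only [scons, tliftTimes_succ, interp_tlift_zero_scons] <;>
      split_ifs <;> first | rfl | omega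

theorem interp_tsubst_zero (A G : Ty) (ρ : ℕ → Set Trm) :
    interp (A.tsubst 0 G) ρ = interp A (scons (interp G ρ) ρ) := by
  rw [interp_tsubst]
  congr 1
  funext n
  cases n <;> rfl

end Ty

theorem Typing.msubst_mem_interp {Γ : List Ty} {t : Trm} {A : Ty} (h : Typing Γ t A)
    {ρ : ℕ → Set Trm} (hρ : ∀ n, Saturated (ρ n)) {σ : ℕ → Trm}
    (hσ : ∀ i B, Γ[i]? = some B → σ i ∈ B.interp ρ) : msubst σ t ∈ A.interp ρ := by
  induction h generalizing ρ σ with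
  | ax hget => exact hσ _ _ hget
  | @arrI Γ A B t _ _ ih =>
    intro u hu
    have hβ : Beta (.app (msubst σ (.lam t)) u) (msubst (scons u σ) t) :=
      subst_msubst_upSubst t σ u ▸ .beta
    refine B.saturated_interp hρ hβ (ih hρ ?_)
    rintro (_ | i) B' hget
    · exact Option.some_injective _ hget ▸ hu
    · exact hσ i B' hget
  | arrE _ _ ihu ihv => exact ihu hρ hσ _ (ihv hρ hσ)
  | allI _ _ ih =>
    simp only [Ty.interp, Set.mem_iInter]
    refine fun S hS => ih (forall_scons hS hρ) fun i B' hget => ?_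
    obtain ⟨B, hB, rfl⟩ := Option.map_eq_some_iff.1 (List.getElem?_map ▸ hget)
    exact Ty.interp_tlift_zero_scons B S ρ ▸ hσ i B hB
  | allE G _ _ _ ih =>
    rw [Ty.interp_tsubst_zero]
    exact Set.mem_iInter₂.1 (ih hρ hσ) _ (G.saturated_interp hρ)

theorem churchBody_ne_app_var_zero (n : ℕ) (w : Trm) : churchBody n ≠ .app w (.var 0) := by
  rcases n with _ | _ | n <;> simp [churchBody]

theorem betaNormal_churchBody (n : ℕ) : BetaNormal (churchBody n) := by
  induction n with
  | zero => exact betaNormal_var 1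
  | succ n ih => exact betaNormal_app_iff.2 ⟨nofun, betaNormal_var 0, ih⟩

theorem typing_church (n : ℕ) : Typing [] (church n) Ent := by
  have hΓ : ∀ B ∈ [Ty.arr (.var 0) (.var 0), .var 0], B.Proper := by
    simp [Ty.Proper]
  have hbody : ∀ n, Typing [.arr (.var 0) (.var 0), .var 0] (churchBody n) (.var 0) := by
    intro n
    induction n with
    | zero => exact .ax rfl hΓ
    | succ n ih => exact .arrE (.ax rfl hΓ) ih
  exact .allI (by simp [Ty.tfv]) (.arrI trivial (.arrI ⟨trivial, trivial⟩ (hbody n)))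

def churchBodyReducts : Set Trm := {u | ∃ n, BetaStar u (churchBody n)}

theorem saturated_churchBodyReducts : Saturated churchBodyReducts :=
  fun _ _ hb ⟨n, hn⟩ => ⟨n, .head hb hn⟩

theorem Typing.exists_betaStar_churchBody {t : Trm} (h : Typing [] t Ent) :
    ∃ n, BetaStar (.app (.app t (.var 1)) (.var 0)) (churchBody n) := by
  have hρ : ∀ _ : ℕ, Saturated churchBodyReducts := fun _ => saturated_churchBodyReducts
  have ht := h.msubst_mem_interp hρ (σ := var) (by simp)
  rw [msubst_var] at ht
  simp only [Ent, Ty.interp, Set.mem_iInter] at ht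
  refine ht _ saturated_churchBodyReducts _ ⟨0, .refl⟩ _ ?_
  rintro w ⟨n, hn⟩
  exact ⟨n + 1, hn.lift (Trm.app (.var 0)) fun _ _ => Beta.appR⟩

theorem BetaNormal.eq_church_of_betaStar {t : Trm} {n : ℕ} (ht : BetaNormal t) (hc : t.Closed)
    (h : BetaStar (.app (.app t (.var 1)) (.var 0)) (churchBody n)) : t = church n := by
  obtain ⟨u, rfl⟩ := ht.exists_eq_lam hc
  have hu := betaNormal_lam_iff.1 ht
  have h₁ : BetaStar (.app (u.subst 0 (.var 1)) (.var 0)) (churchBody n) :=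
    h.of_unique_head (.appL .beta) (fun _ => beta_app_var_eq nofun fun _ => beta_app_lam_var_eq hu)
      (betaNormal_churchBody n)
  obtain ⟨a, rfl⟩ : ∃ a, u = .lam a := by
    by_contra hl
    have hnf : BetaNormal (.app (u.subst 0 (.var 1)) (.var 0)) := betaNormal_app_iff.2
      ⟨subst_var_ne_lam (not_exists.1 hl) 0 1, hu.subst_var 0 1, betaNormal_var 0⟩
    exact churchBody_ne_app_var_zero n _ (hnf.eq_of_betaStar h₁).symm
  have ha := betaNormal_lam_iff.1 hu
  have h₂ : BetaStar ((a.subst 1 (.var 1)).subst 0 (.var 0)) (churchBody n) :=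
    h₁.of_unique_head .beta (fun _ => beta_app_lam_var_eq (ha.subst_var 1 1))
      (betaNormal_churchBody n)
  have hfv : ∀ m ∈ a.fv, m < 2 := fun m hm => by
    by_contra! hm2
    have hm' : m - 2 ∈ (lam (lam a)).fv := by simpa [fv, Nat.sub_add_cancel hm2]
    exact Set.eq_empty_iff_forall_notMem.1 hc _ hm'
  rw [subst_subst_var_eq_self a 0 hfv] at h₂
  rw [ha.eq_of_betaStar h₂, church]

/-- for β-normal t, ⊢_F t : Ent iff t is a Church numeral. -/
theorem stmt7 (t : Trm) (hn : BetaNormal t) :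
    Typing [] t Ent ↔ ∃ n : ℕ, t = church n := by
  constructor
  · intro h
    obtain ⟨n, hred⟩ := h.exists_betaStar_churchBody
    exact ⟨n, hn.eq_church_of_betaStar h.closed hred⟩
  · rintro ⟨n, rfl⟩
    exact typing_church n
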